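/- Let (T_m)_m be a sequence of meshes of [0,1] with mesh sizes h_m → 0, and for each m let w_{h_m} ∈ H_{T_m} be a piecewise constant function. If (w_{h_m})_m converges to some w strongly in L²(0,1) and the dual norms ‖w_{h_m}‖_{−1,2,T_m} converge to 0 as m → ∞, then w = 0 (as an element of L²(0,1)). -/

import Mathlib

open MeasureTheory Real Filter Topology

noncomputable section

namespace Corrosion

/-- The Bernoulli function `B(x) = x / (e^x - 1)`, `B(0) = 1`. -/
def Bern (x : ℝ) : ℝ := if x = 0 then 1 else x / (Real.exp x - 1)

/-- The two species: cations `P` and electrons `N`. -/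
inductive Sp | P | N

/-- charge numbers: `z_P = 3`, `z_N = -1`. -/
def z : Sp → ℝ
  | Sp.P => 3
  | Sp.N => -1

/-- A mesh of `[0,1]`: edge points `xe 0 = x_{1/2} = 0 < xe 1 = x_{3/2} < … < xe I = x_{I+1/2} = 1`. -/
structure Mesh where
  I : ℕ
  hI : 1 ≤ I
  xe : ℕ → ℝ
  xe0 : xe 0 = 0
  xeI : xe I = 1
  mono : ∀ j, j < I → xe j < xe (j + 1)

namespace Mesh

variable (m : Mesh)

/-- cell centers `x_i` for `1 ≤ i ≤ I` , with `x_0 = 0` and `x_{I+1} = 1`. -/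
def xc (i : ℕ) : ℝ :=
  if i = 0 then 0 else if i = m.I + 1 then 1 else (m.xe (i - 1) + m.xe i) / 2

/-- `h_i = x_{i+1/2} - x_{i-1/2}` for `1 ≤ i ≤ I`. -/
def h (i : ℕ) : ℝ := m.xe i - m.xe (i - 1)

/-- `h_{i+1/2} = x_{i+1} - x_i` for `0 ≤ i ≤ I`. -/
def hp (i : ℕ) : ℝ := m.xc (i + 1) - m.xc i

/-- mesh size `h = max_{1 ≤ i ≤ I} h_i`. -/
def size : ℝ := (Finset.Icc 1 m.I).sup' ⟨1, Finset.mem_Icc.mpr ⟨le_refl 1, m.hI⟩⟩ m.h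

/-- piecewise constant function associated to a vector `(w_i)_{0 ≤ i ≤ I+1}`:
equal to `w i` on `(x_{i-1/2}, x_{i+1/2})`, to `w 0` at `x = 0`, to `w (I+1)` at `x = 1`. -/
def pw (w : ℕ → ℝ) (x : ℝ) : ℝ :=
  if x = 0 then w 0 else if x = 1 then w (m.I + 1) else w (sInf {i : ℕ | x < m.xe i})

/-- square of the discrete `H¹` norm `‖w_h‖_{1,T}`. -/
def norm1sq (w : ℕ → ℝ) : ℝ :=
  (∑ i ∈ Finset.range (m.I + 1), (w (i + 1) - w i) ^ 2 / m.hp i) + w 0 ^ 2 + w (m.I + 1) ^ 2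

/-- square of the discrete `L²` norm `‖w_h‖_0`. -/
def norm0sq (w : ℕ → ℝ) : ℝ := ∑ i ∈ Finset.Icc 1 m.I, m.h i * w i ^ 2

/-- the discrete dual norm `‖w_h‖_{-1,2,T}`. -/
def normDual (w : ℕ → ℝ) : ℝ :=
  sSup {r : ℝ | ∃ v : ℕ → ℝ, m.norm1sq v ≤ 1 ∧
    r = ∫ x in Set.Ioo (0:ℝ) 1, m.pw w x * m.pw v x}

/-- piecewise constant space derivative: on `(x_i, x_{i+1})` it equals `(w_{i+1} - w_i)/h_{i+1/2}`. -/
def dpw (w : ℕ → ℝ) (x : ℝ) : ℝ :=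
  (w (sInf {i : ℕ | x < m.xc (i + 1)} + 1) - w (sInf {i : ℕ | x < m.xc (i + 1)})) /
    m.hp (sInf {i : ℕ | x < m.xc (i + 1)})

end Mesh

/-- All the data of the corrosion model. -/
structure Data where
  lam : ℝ
  eps : ℝ
  alpha0 : ℝ
  alpha1 : ℝ
  V : ℝ
  rho : ℝ
  dPsi0 : ℝ
  dPsi1 : ℝ
  umax : Sp → ℝ
  m0 : Sp → ℝ
  k0 : Sp → ℝ
  m1 : Sp → ℝ
  k1 : Sp → ℝ
  a0 : Sp → ℝ
  b0 : Sp → ℝ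
  a1 : Sp → ℝ
  b1 : Sp → ℝ
  u0 : Sp → ℝ → ℝ
  lam_pos : 0 < lam
  umax_pos : ∀ u, 0 < umax u
  m0_pos : ∀ u, 0 < m0 u
  k0_pos : ∀ u, 0 < k0 u
  m1_pos : ∀ u, 0 < m1 u
  k1_pos : ∀ u, 0 < k1 u
  a0_mem : ∀ u, a0 u ∈ Set.Icc (0:ℝ) 1
  b0_mem : ∀ u, b0 u ∈ Set.Icc (0:ℝ) 1
  a1_mem : ∀ u, a1 u ∈ Set.Icc (0:ℝ) 1
  b1_mem : ∀ u, b1 u ∈ Set.Icc (0:ℝ) 1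
  u0_meas : ∀ u, Measurable (u0 u)

namespace Data
variable (d : Data)

/-- `ε_P = 1`, `ε_N = ε`. -/
def epsu : Sp → ℝ
  | Sp.P => 1
  | Sp.N => d.eps

def beta0 (u : Sp) (x : ℝ) : ℝ :=
  d.m0 u * Real.exp (-(z u) * d.b0 u * x) + d.k0 u * Real.exp (z u * d.a0 u * x)

def beta1 (u : Sp) (x : ℝ) : ℝ :=
  d.m1 u * Real.exp (-(z u) * d.b1 u * x) + d.k1 u * Real.exp (z u * d.a1 u * x)

def gamma0 (u : Sp) (x : ℝ) : ℝ := d.m0 u * d.umax u * Real.exp (-(z u) * d.b0 u * x)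

def gamma1 (u : Sp) (x : ℝ) : ℝ := d.k1 u * d.umax u * Real.exp (z u * d.a1 u * x)

/-- Hypotheses (H). -/
def HypH : Prop :=
  (3 * d.umax Sp.P - d.umax Sp.N + d.rho = 0) ∧
  (∀ u, ∀ᵐ x ∂(volume.restrict (Set.Ioo (0:ℝ) 1)), 0 ≤ d.u0 u x ∧ d.u0 u x ≤ d.umax u) ∧
  (-(1 / (3 * d.a0 Sp.P)) * (1 + Real.log (d.alpha0 * d.a0 Sp.P * d.k0 Sp.P)) ≤ d.dPsi0 ∧
    d.dPsi0 ≤ (1 / d.a0 Sp.N) * (1 + Real.log (d.alpha0 * d.a0 Sp.N * d.k0 Sp.N))) ∧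
  (-(1 / d.b1 Sp.N) * (1 + Real.log (d.alpha1 * d.b1 Sp.N * d.m1 Sp.N)) ≤ d.dPsi1 ∧
    d.dPsi1 ≤ (1 / (3 * d.b1 Sp.P)) * (1 + Real.log (d.alpha1 * d.b1 Sp.P * d.m1 Sp.P)))

end Data

/-- `dΨ_{i+1/2} = (Ψ_{i+1} - Ψ_i)/h_{i+1/2}`. -/
def dPsiF (m : Mesh) (Psi : ℕ → ℝ) (i : ℕ) : ℝ := (Psi (i + 1) - Psi i) / m.hp i

/-- the Scharfetter-Gummel numerical flux `F_{u,i+1/2}`. -/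
def Flux (m : Mesh) (d : Data) (u : Sp) (Psi w : ℕ → ℝ) (i : ℕ) : ℝ :=
  (Bern (z u * m.hp i * dPsiF m Psi i) * w i -
    Bern (-(z u) * m.hp i * dPsiF m Psi i) * w (i + 1)) / m.hp i

/-- The fully implicit scheme (S), with time step `Δt = T / K`.
`sol u k i` is `u_i^k` (for `u = P, N`) and `Psi k i` is `Ψ_i^k`. -/
def Scheme (m : Mesh) (d : Data) (T : ℝ) (K : ℕ)
    (sol : Sp → ℕ → ℕ → ℝ) (Psi : ℕ → ℕ → ℝ) : Prop :=
  (∀ u i, 1 ≤ i → i ≤ m.I →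
    sol u 0 i = (1 / m.h i) * ∫ x in Set.Ioo (m.xe (i - 1)) (m.xe i), d.u0 u x) ∧
  (∀ k, k < K → ∀ i, 1 ≤ i → i ≤ m.I →
    -(d.lam ^ 2) * (dPsiF m (Psi (k + 1)) i - dPsiF m (Psi (k + 1)) (i - 1)) =
      m.h i * (3 * sol Sp.P (k + 1) i - sol Sp.N (k + 1) i + d.rho)) ∧
  (∀ u k, k < K → ∀ i, 1 ≤ i → i ≤ m.I →
    d.epsu u * m.h i * (sol u (k + 1) i - sol u k i) / (T / K) +
      Flux m d u (Psi (k + 1)) (sol u (k + 1)) i -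
      Flux m d u (Psi (k + 1)) (sol u (k + 1)) (i - 1) = 0) ∧
  (∀ k, k < K → Psi (k + 1) 0 - d.alpha0 * dPsiF m (Psi (k + 1)) 0 = d.dPsi0) ∧
  (∀ k, k < K →
    Psi (k + 1) (m.I + 1) + d.alpha1 * dPsiF m (Psi (k + 1)) m.I = d.V - d.dPsi1) ∧
  (∀ u k, k < K →
    -(Flux m d u (Psi (k + 1)) (sol u (k + 1)) 0) =
      d.beta0 u (Psi (k + 1) 0) * sol u (k + 1) 0 - d.gamma0 u (Psi (k + 1) 0)) ∧
  (∀ u k, k < K →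
    Flux m d u (Psi (k + 1)) (sol u (k + 1)) m.I =
      d.beta1 u (d.V - Psi (k + 1) (m.I + 1)) * sol u (k + 1) (m.I + 1) -
      d.gamma1 u (d.V - Psi (k + 1) (m.I + 1)))

/-- The stability property `0 ≤ u_i^k ≤ u^max` for all `i, k`. -/
def Stable (m : Mesh) (d : Data) (K : ℕ) (sol : Sp → ℕ → ℕ → ℝ) : Prop :=
  ∀ u k, k ≤ K → ∀ i, i ≤ m.I + 1 → 0 ≤ sol u k i ∧ sol u k i ≤ d.umax u

/-- the approximate space-time solution `w_{h,Δt}`, equal to the piecewise constant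
function built on `w^{k+1}` for `t ∈ [t^k, t^{k+1})`, with `Δt = T/K`. -/
def apx (m : Mesh) (T : ℝ) (K : ℕ) (w : ℕ → ℕ → ℝ) (x t : ℝ) : ℝ :=
  m.pw (w (Nat.floor (t / (T / K)) + 1)) x

/-- the discrete space derivative `∂_{x,T} w_{h,Δt}`. -/
def dapx (m : Mesh) (T : ℝ) (K : ℕ) (w : ℕ → ℕ → ℝ) (x t : ℝ) : ℝ :=
  m.dpw (w (Nat.floor (t / (T / K)) + 1)) x


/-- hyperbolic cotangent `coth y = cosh y / sinh y`. -/
def coth (x : ℝ) : ℝ := Real.cosh x / Real.sinh x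

/-- approximate trace at `x = 0`: `t ∈ [t^k, t^{k+1}) ↦ w_0^{k+1}`. -/
def trace0 (T : ℝ) (K : ℕ) (w : ℕ → ℕ → ℝ) (t : ℝ) : ℝ :=
  w (Nat.floor (t / (T / K)) + 1) 0

/-- approximate trace at `x = 1`: `t ∈ [t^k, t^{k+1}) ↦ w_{I+1}^{k+1}`. -/
def trace1 (m : Mesh) (T : ℝ) (K : ℕ) (w : ℕ → ℕ → ℝ) (t : ℝ) : ℝ :=
  w (Nat.floor (t / (T / K)) + 1) (m.I + 1)

/-- the measure on `(0,1) × (0,T)` (space × time). -/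
def stMeasure (T : ℝ) : MeasureTheory.Measure (ℝ × ℝ) :=
  (MeasureTheory.volume.restrict (Set.Ioo (0:ℝ) 1)).prod
    (MeasureTheory.volume.restrict (Set.Ioo (0:ℝ) T))

end Corrosion

/-! Test the limit `w` against a smooth compactly supported `g`, sampled at the cell centres:
`v_i = g (x_i)`. Since `g` is Lipschitz, `‖v‖_{1,T}` is bounded independently of the mesh, so
`|∫ w_h v_h| ≤ C ‖w_h‖_{-1,2,T} → 0`. On the other hand `v_h → g` uniformly (the error is at most
`Lip(g) · h`) while `w_h → w` in `L²`, so `∫ w_h v_h → ∫ w g`. Hence `∫ w g = 0` for every such `g`,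
and `w = 0` almost everywhere. -/

open Set Finset
open scoped NNReal ENNReal

section Integrals

variable {α : Type*} [MeasurableSpace α] {μ : Measure α}

theorem integral_abs_le_sqrt_integral_sq [IsProbabilityMeasure μ] {f : α → ℝ}
    (hf : MemLp f 2 μ) : ∫ x, |f x| ∂μ ≤ √(∫ x, f x ^ 2 ∂μ) := by
  have hvar := ProbabilityTheory.variance_eq_sub hf.abs
  have hnonneg := ProbabilityTheory.variance_nonneg |f| μ
  simp only [Pi.pow_apply, Pi.abs_apply, sq_abs] at hvar
  exact Real.le_sqrt_of_sq_le (by linarith)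

theorem tendsto_integral_abs_of_tendsto_integral_sq [IsProbabilityMeasure μ]
    {F : ℕ → α → ℝ} (hF : ∀ n, MemLp (F n) 2 μ)
    (h : Tendsto (fun n => ∫ x, F n x ^ 2 ∂μ) atTop (𝓝 0)) :
    Tendsto (fun n => ∫ x, |F n x| ∂μ) atTop (𝓝 0) :=
  squeeze_zero (fun _ => integral_nonneg fun _ => abs_nonneg _)
    (fun n => integral_abs_le_sqrt_integral_sq (hF n)) (by simpa using h.sqrt)

theorem abs_integral_mul_sub_integral_mul_le {F G f g : α → ℝ} {M ε : ℝ}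
    (hF : Integrable F μ) (hf : Integrable f μ)
    (hG : AEStronglyMeasurable G μ) (hg : AEStronglyMeasurable g μ)
    (hGM : ∀ᵐ x ∂μ, |G x| ≤ M) (hGg : ∀ᵐ x ∂μ, |G x - g x| ≤ ε) :
    |∫ x, F x * G x ∂μ - ∫ x, f x * g x ∂μ| ≤ M * ∫ x, |F x - f x| ∂μ + ε * ∫ x, |f x| ∂μ := by
  have hgM : ∀ᵐ x ∂μ, ‖g x‖ ≤ M + ε := by
    filter_upwards [hGM, hGg] with x hM hε
    rw [Real.norm_eq_abs]
    linarith [abs_sub_abs_le_abs_sub (g x) (G x), abs_sub_comm (g x) (G x)]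
  have hFfG : Integrable (fun x => (F x - f x) * G x) μ := (hF.sub hf).mul_bdd hG hGM
  have hfGg : Integrable (fun x => f x * (G x - g x)) μ := hf.mul_bdd (hG.sub hg) hGg
  have hsplit : ∫ x, F x * G x ∂μ - ∫ x, f x * g x ∂μ
      = ∫ x, (F x - f x) * G x ∂μ + ∫ x, f x * (G x - g x) ∂μ := by
    rw [← integral_sub (hF.mul_bdd hG hGM) (hf.mul_bdd hg hgM), ← integral_add hFfG hfGg]
    congr 1 with x
    ring
  have h1 : ‖∫ x, (F x - f x) * G x ∂μ‖ ≤ M * ∫ x, |F x - f x| ∂μ := by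
    rw [← integral_const_mul]
    refine norm_integral_le_of_norm_le ((hF.sub hf).abs.const_mul M) ?_
    filter_upwards [hGM] with x hx
    rw [norm_mul, mul_comm M]
    exact mul_le_mul_of_nonneg_left hx (norm_nonneg _)
  have h2 : ‖∫ x, f x * (G x - g x) ∂μ‖ ≤ ε * ∫ x, |f x| ∂μ := by
    rw [← integral_const_mul]
    refine norm_integral_le_of_norm_le (hf.abs.const_mul ε) ?_
    filter_upwards [hGg] with x hx
    rw [norm_mul, mul_comm ε]
    exact mul_le_mul_of_nonneg_left hx (norm_nonneg _)
  rw [hsplit, ← Real.norm_eq_abs]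
  exact (norm_add_le _ _).trans (add_le_add h1 h2)

theorem tendsto_integral_mul_of_tendsto {F G : ℕ → α → ℝ} {f g : α → ℝ} {M : ℝ} {ε : ℕ → ℝ}
    (hF : ∀ n, Integrable (F n) μ) (hf : Integrable f μ)
    (hFf : Tendsto (fun n => ∫ x, |F n x - f x| ∂μ) atTop (𝓝 0))
    (hG : ∀ n, AEStronglyMeasurable (G n) μ) (hg : AEStronglyMeasurable g μ)
    (hGM : ∀ n, ∀ᵐ x ∂μ, |G n x| ≤ M)
    (hGg : ∀ n, ∀ᵐ x ∂μ, |G n x - g x| ≤ ε n) (hε : Tendsto ε atTop (𝓝 0)) :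
    Tendsto (fun n => ∫ x, F n x * G n x ∂μ) atTop (𝓝 (∫ x, f x * g x ∂μ)) := by
  have hbound : Tendsto (fun n => M * ∫ x, |F n x - f x| ∂μ + ε n * ∫ x, |f x| ∂μ)
      atTop (𝓝 0) := by
    simpa using (hFf.const_mul M).add (hε.mul_const _)
  rw [tendsto_iff_norm_sub_tendsto_zero]
  refine squeeze_zero_norm (fun n => ?_) hbound
  rw [Real.norm_eq_abs, abs_norm]
  exact abs_integral_mul_sub_integral_mul_le (hF n) hf (hG n) hg (hGM n) (hGg n)

end Integrals

namespace Corrosion.Mesh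

variable (m : Mesh)

lemma xe_strictMonoOn : StrictMonoOn m.xe (Set.Iic m.I) :=
  strictMonoOn_Iic_of_lt_succ m.mono

lemma xe_lt_xe {j k : ℕ} (hjk : j < k) (hk : k ≤ m.I) : m.xe j < m.xe k :=
  m.xe_strictMonoOn (hjk.le.trans hk) hk hjk

@[simp] lemma xc_zero : m.xc 0 = 0 := by simp [xc]

@[simp] lemma xc_I_add_one : m.xc (m.I + 1) = 1 := by simp [xc]

lemma xc_mem_Ioo {i : ℕ} (h1 : 1 ≤ i) (hi : i ≤ m.I) :
    m.xc i ∈ Ioo (m.xe (i - 1)) (m.xe i) := by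
  have hlt := m.xe_lt_xe (Nat.sub_lt h1 one_pos) hi
  rw [xc, if_neg (by omega), if_neg (by omega)]
  constructor <;> linarith

lemma xc_lt_xc_succ {i : ℕ} (hi : i ≤ m.I) : m.xc i < m.xc (i + 1) := by
  rcases Nat.eq_zero_or_pos i with rfl | h1
  · simpa [m.xe0] using (m.xc_mem_Ioo le_rfl m.hI).1
  rcases hi.lt_or_eq with hi | rfl
  · have h_left := (m.xc_mem_Ioo h1 hi.le).2
    have h_right := (m.xc_mem_Ioo (i := i + 1) (by omega) hi).1
    rw [Nat.add_sub_cancel] at h_right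
    exact h_left.trans h_right
  · simpa [m.xeI] using (m.xc_mem_Ioo h1 le_rfl).2

lemma hp_pos {i : ℕ} (hi : i ≤ m.I) : 0 < m.hp i :=
  sub_pos.mpr (m.xc_lt_xc_succ hi)

lemma sum_hp : ∑ i ∈ range (m.I + 1), m.hp i = 1 := by
  simp [hp, sum_range_sub (fun i => m.xc i)]

lemma h_le_size {i : ℕ} (h1 : 1 ≤ i) (hi : i ≤ m.I) : m.h i ≤ m.size :=
  le_sup' m.h (mem_Icc.mpr ⟨h1, hi⟩)

/-- The index `i` of the cell `[x_{i-1/2}, x_{i+1/2})` containing `x`. -/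
def cell (x : ℝ) : ℕ := sInf {i | x < m.xe i}

lemma cell_spec {x : ℝ} (hx : x ∈ Ioo (0 : ℝ) 1) :
    1 ≤ m.cell x ∧ m.cell x ≤ m.I ∧ m.xe (m.cell x - 1) ≤ x ∧ x < m.xe (m.cell x) := by
  have hI : m.I ∈ {i | x < m.xe i} := by simpa [m.xeI] using hx.2
  have hlt : x < m.xe (m.cell x) := Nat.sInf_mem ⟨_, hI⟩
  have h1 : 1 ≤ m.cell x := by
    by_contra h0
    have : m.cell x = 0 := by omega
    rw [this, m.xe0] at hlt
    exact hx.1.not_gt hlt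
  refine ⟨h1, Nat.sInf_le hI, not_lt.mp fun h => ?_, hlt⟩
  exact Nat.notMem_of_lt_sInf (Nat.sub_lt h1 one_pos) h

lemma monotoneOn_cell : MonotoneOn m.cell (Ioo 0 1) := fun _ _ _ hy hxy =>
  csInf_le_csInf (OrderBot.bddBelow _) ⟨m.I, by simpa [m.xeI] using hy.2⟩
    fun _ hi => hxy.trans_lt hi

lemma pw_eq_of_mem_Ioo {x : ℝ} (hx : x ∈ Ioo (0 : ℝ) 1) (w : ℕ → ℝ) :
    m.pw w x = w (m.cell x) := by
  simp [pw, hx.1.ne', hx.2.ne, cell]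

lemma aestronglyMeasurable_pw (w : ℕ → ℝ) :
    AEStronglyMeasurable (m.pw w) (volume.restrict (Ioo (0 : ℝ) 1)) :=
  have hcell := aemeasurable_restrict_of_monotoneOn measurableSet_Ioo m.monotoneOn_cell
  (measurable_from_nat.comp_aemeasurable hcell).aestronglyMeasurable.congr
    (ae_restrict_of_forall_mem measurableSet_Ioo fun _ hx => (m.pw_eq_of_mem_Ioo hx w).symm)

lemma abs_pw_le {w : ℕ → ℝ} {C : ℝ} (hw : ∀ i, 1 ≤ i → i ≤ m.I → |w i| ≤ C) :
    ∀ᵐ x ∂(volume.restrict (Ioo (0 : ℝ) 1)), |m.pw w x| ≤ C :=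
  ae_restrict_of_forall_mem measurableSet_Ioo fun x hx => by
    obtain ⟨h1, hI, -⟩ := m.cell_spec hx
    rw [m.pw_eq_of_mem_Ioo hx]
    exact hw _ h1 hI

lemma exists_abs_pw_le (w : ℕ → ℝ) :
    ∃ C, ∀ᵐ x ∂(volume.restrict (Ioo (0 : ℝ) 1)), |m.pw w x| ≤ C :=
  ⟨_, m.abs_pw_le fun _ _ hi =>
    single_le_sum (fun j _ => abs_nonneg (w j)) (mem_range.mpr (Nat.lt_succ_of_le hi))⟩

lemma memLp_pw (w : ℕ → ℝ) (p : ℝ≥0∞) : MemLp (m.pw w) p (volume.restrict (Ioo (0 : ℝ) 1)) :=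
  let ⟨C, hC⟩ := m.exists_abs_pw_le w
  MemLp.of_bound (m.aestronglyMeasurable_pw w) C hC

lemma abs_pw_comp_xc_sub_le {g : ℝ → ℝ} {L : ℝ≥0} (hg : LipschitzWith L g) {x : ℝ}
    (hx : x ∈ Ioo (0 : ℝ) 1) : |m.pw (g ∘ m.xc) x - g x| ≤ L * m.size := by
  obtain ⟨h1, hI, hle, hlt⟩ := m.cell_spec hx
  have hxc := m.xc_mem_Ioo h1 hI
  have hdist : |m.xc (m.cell x) - x| ≤ m.h (m.cell x) := by
    rw [abs_sub_le_iff, h]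
    constructor <;> linarith [hxc.1, hxc.2]
  rw [m.pw_eq_of_mem_Ioo hx, Function.comp_apply, ← Real.dist_eq]
  calc dist (g (m.xc (m.cell x))) (g x) ≤ L * dist (m.xc (m.cell x)) x := hg.dist_le_mul _ _
    _ ≤ L * m.size := by
      rw [Real.dist_eq]
      gcongr
      exact hdist.trans (m.h_le_size h1 hI)

lemma pw_const_mul (c : ℝ) (v : ℕ → ℝ) (x : ℝ) :
    m.pw (fun i => c * v i) x = c * m.pw v x := by
  unfold pw
  split_ifs <;> rfl

lemma norm1sq_const_mul (c : ℝ) (v : ℕ → ℝ) :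
    m.norm1sq (fun i => c * v i) = c ^ 2 * m.norm1sq v := by
  simp only [norm1sq, ← mul_sub, mul_pow, mul_div_assoc, ← mul_sum]
  ring

/-- Discrete Sobolev inequality: `|v_i| ≤ |v_0| + ∑ |v_{j+1} - v_j|`, and by Cauchy–Schwarz the
sum is at most `‖v‖_{1,T}` because `∑ h_{j+1/2} = 1`. -/
lemma abs_le_two_of_norm1sq_le_one {v : ℕ → ℝ} (hv : m.norm1sq v ≤ 1) {i : ℕ}
    (hi : i ≤ m.I + 1) : |v i| ≤ 2 := by
  set S := ∑ j ∈ range (m.I + 1), (v (j + 1) - v j) ^ 2 / m.hp j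
  have hN : m.norm1sq v = S + v 0 ^ 2 + v (m.I + 1) ^ 2 := rfl
  have hS : 0 ≤ S := sum_nonneg fun j hj =>
    div_nonneg (sq_nonneg _) (m.hp_pos (Nat.lt_succ_iff.mp (mem_range.mp hj))).le
  have hv0 : |v 0| ≤ 1 := by
    rw [← sq_le_one_iff_abs_le_one]
    linarith [sq_nonneg (v (m.I + 1))]
  have hvar : ∑ j ∈ range (m.I + 1), |v (j + 1) - v j| ≤ 1 := by
    have titu := sq_sum_div_le_sum_sq_div (range (m.I + 1)) (fun j => |v (j + 1) - v j|)
      fun j hj => m.hp_pos (Nat.lt_succ_iff.mp (mem_range.mp hj))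
    simp only [sq_abs, m.sum_hp, div_one] at titu
    have hS1 : S ≤ 1 := by linarith [sq_nonneg (v 0), sq_nonneg (v (m.I + 1))]
    exact (pow_le_one_iff_of_nonneg (sum_nonneg fun _ _ => abs_nonneg _) two_ne_zero).mp
      (titu.trans hS1)
  calc |v i| = |v 0 + ∑ j ∈ range i, (v (j + 1) - v j)| := by rw [sum_range_sub, add_sub_cancel]
    _ ≤ |v 0| + ∑ j ∈ range i, |v (j + 1) - v j| :=
      (abs_add_le _ _).trans (by gcongr; exact abs_sum_le_sum_abs _ _)
    _ ≤ 1 + ∑ j ∈ range (m.I + 1), |v (j + 1) - v j| := by gcongr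
    _ ≤ 2 := by linarith

lemma norm1sq_comp_xc_le {g : ℝ → ℝ} {L : ℝ≥0} (hg : LipschitzWith L g) :
    m.norm1sq (g ∘ m.xc) ≤ L ^ 2 + g 0 ^ 2 + g 1 ^ 2 := by
  have hterm : ∀ j ∈ range (m.I + 1),
      (g (m.xc (j + 1)) - g (m.xc j)) ^ 2 / m.hp j ≤ L ^ 2 * m.hp j := by
    intro j hj
    have hpos := m.hp_pos (Nat.lt_succ_iff.mp (mem_range.mp hj))
    have hlip : |g (m.xc (j + 1)) - g (m.xc j)| ≤ L * m.hp j := by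
      have habs : |m.xc (j + 1) - m.xc j| = m.hp j := abs_of_pos hpos
      have := hg.dist_le_mul (m.xc (j + 1)) (m.xc j)
      rwa [Real.dist_eq, Real.dist_eq, habs] at this
    rw [div_le_iff₀ hpos, ← sq_abs]
    nlinarith [abs_nonneg (g (m.xc (j + 1)) - g (m.xc j))]
  have hsum := sum_le_sum hterm
  rw [← mul_sum, m.sum_hp, mul_one] at hsum
  simp only [norm1sq, Function.comp_apply, xc_zero, xc_I_add_one]
  linarith

lemma bddAbove_integral_pw_mul (w : ℕ → ℝ) :
    BddAbove {r : ℝ | ∃ v : ℕ → ℝ, m.norm1sq v ≤ 1 ∧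
      r = ∫ x in Ioo (0 : ℝ) 1, m.pw w x * m.pw v x} := by
  obtain ⟨C, hC⟩ := m.exists_abs_pw_le w
  refine ⟨C * 2 * (volume.restrict (Ioo (0 : ℝ) 1)).real univ, ?_⟩
  rintro _ ⟨v, hv, rfl⟩
  have hbound : ∀ᵐ x ∂(volume.restrict (Ioo (0 : ℝ) 1)), ‖m.pw w x * m.pw v x‖ ≤ C * 2 := by
    have hv2 := m.abs_pw_le fun _ _ hi => m.abs_le_two_of_norm1sq_le_one hv (Nat.le_succ_of_le hi)
    filter_upwards [hC, hv2] with x hw hv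
    rw [norm_mul]
    exact mul_le_mul hw hv (norm_nonneg _) ((abs_nonneg _).trans hw)
  exact (le_abs_self _).trans (norm_integral_le_of_norm_le_const hbound)

lemma integral_pw_mul_le_normDual (w : ℕ → ℝ) {v : ℕ → ℝ} (hv : m.norm1sq v ≤ 1) :
    ∫ x in Ioo (0 : ℝ) 1, m.pw w x * m.pw v x ≤ m.normDual w :=
  le_csSup (m.bddAbove_integral_pw_mul w) ⟨v, hv, rfl⟩

lemma abs_integral_pw_mul_le (w : ℕ → ℝ) {v : ℕ → ℝ} {c : ℝ} (hc : 0 < c)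
    (hv : m.norm1sq v ≤ c ^ 2) :
    |∫ x in Ioo (0 : ℝ) 1, m.pw w x * m.pw v x| ≤ c * m.normDual w := by
  have key : ∀ s : ℝ, s ^ 2 = 1 →
      s * ∫ x in Ioo (0 : ℝ) 1, m.pw w x * m.pw v x ≤ c * m.normDual w := by
    intro s hs
    have hnorm : m.norm1sq (fun i => s / c * v i) ≤ 1 := by
      rw [norm1sq_const_mul, div_pow, hs, one_div_mul_eq_div, div_le_one (by positivity)]
      exact hv
    have := m.integral_pw_mul_le_normDual w hnorm
    simp only [pw_const_mul, mul_left_comm _ (s / c), integral_const_mul] at this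
    rwa [div_mul_eq_mul_div, div_le_iff₀ hc, mul_comm _ c] at this
  rw [abs_le]
  constructor
  · linarith [key (-1) (by norm_num)]
  · linarith [key 1 (by norm_num)]

end Corrosion.Mesh

instance isProbabilityMeasure_restrict_Ioo_zero_one :
    IsProbabilityMeasure (volume.restrict (Ioo (0 : ℝ) 1)) :=
  ⟨by simp⟩

open Corrosion in
/-- if `w_{h_m} → w` in `L²(0,1)` and `‖w_{h_m}‖_{-1,2,T_m} → 0` then `w = 0`. -/
theorem dual_norm_limit_zero
    (msh : ℕ → Mesh) (hsz : Filter.Tendsto (fun n => (msh n).size) Filter.atTop (nhds 0))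
    (w : ℕ → ℕ → ℝ) (wlim : ℝ → ℝ)
    (hmem : MemLp wlim 2 (volume.restrict (Set.Ioo (0:ℝ) 1)))
    (hconv : Filter.Tendsto
      (fun n => ∫ x in Set.Ioo (0:ℝ) 1, ((msh n).pw (w n) x - wlim x) ^ 2)
      Filter.atTop (nhds 0))
    (hdual : Filter.Tendsto (fun n => (msh n).normDual (w n)) Filter.atTop (nhds 0)) :
    ∀ᵐ x ∂(volume.restrict (Set.Ioo (0:ℝ) 1)), wlim x = 0 := by
  have hwlim : Integrable wlim (volume.restrict (Ioo (0 : ℝ) 1)) := hmem.integrable one_le_two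
  refine ae_eq_zero_of_integral_contDiff_smul_eq_zero hwlim.locallyIntegrable fun g hg hgc => ?_
  obtain ⟨L, hL⟩ := hg.lipschitzWith_of_hasCompactSupport hgc (by simp)
  obtain ⟨M, hM⟩ := hg.continuous.bounded_above_of_compact_support hgc
  set c := √(L ^ 2 + g 0 ^ 2 + g 1 ^ 2 + 1)
  have hc : 0 < c := Real.sqrt_pos.mpr (by positivity)
  have hc2 : ∀ n, (msh n).norm1sq (g ∘ (msh n).xc) ≤ c ^ 2 := fun n => by
    rw [Real.sq_sqrt (by positivity)]
    linarith [(msh n).norm1sq_comp_xc_le hL]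
  set A := fun n => ∫ x in Ioo (0 : ℝ) 1, (msh n).pw (w n) x * (msh n).pw (g ∘ (msh n).xc) x
  have h_zero : Tendsto A atTop (𝓝 0) :=
    squeeze_zero_norm (fun n => (msh n).abs_integral_pw_mul_le (w n) hc (hc2 n))
      (by simpa using hdual.const_mul c)
  have h_lim : Tendsto A atTop (𝓝 (∫ x in Ioo (0 : ℝ) 1, wlim x * g x)) :=
    tendsto_integral_mul_of_tendsto (fun n => ((msh n).memLp_pw (w n) 1).integrable le_rfl) hwlim
      (tendsto_integral_abs_of_tendsto_integral_sq
        (fun n => ((msh n).memLp_pw (w n) 2).sub hmem) hconv)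
      (fun n => (msh n).aestronglyMeasurable_pw _) hg.continuous.aestronglyMeasurable
      (fun n => (msh n).abs_pw_le fun _ _ _ => hM _)
      (fun n => ae_restrict_of_forall_mem measurableSet_Ioo fun _ hx =>
        (msh n).abs_pw_comp_xc_sub_le hL hx)
      (by simpa using hsz.const_mul (L : ℝ))
  simpa [mul_comm] using tendsto_nhds_unique h_lim h_zero
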